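/- arXiv:2408.00529 — 3 statements merged into one kernel-verified Lean document; each statement's English description precedes it below -/
import Mathlib

section
/- Let G be a finite graph on n ≥ 2 vertices with minimum degree δ ≥ 10·ln(n). Then there exists a subset A ⊆ V(G) such that |A| ≤ 10·n·ln(n)/δ and |N(v) ∩ A| > 2·ln(n) for every vertex v ∈ V(G). -/
open Finset

section SDCAux

variable {V : Type*} [Fintype V] [DecidableEq V] (G : SimpleGraph V) [DecidableRel G.Adj]

private noncomputable def sdcPsi (A : Finset V) : ℝ :=
  ∑ v, (2:ℝ) ^ (-(((G.neighborFinset v ∩ A).card : ℕ) : ℝ))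

private lemma sdc_inner (A : Finset V) (v : V) :
    ∑ u ∈ Aᶜ, (2:ℝ) ^ (-(((G.neighborFinset v ∩ insert u A).card : ℕ) : ℝ))
      = ((Aᶜ.card : ℝ) - ((G.neighborFinset v \ A).card : ℝ) / 2)
          * (2:ℝ) ^ (-(((G.neighborFinset v ∩ A).card : ℕ) : ℝ)) := by
  classical
  set N := G.neighborFinset v with hN
  set h : ℕ := (N ∩ A).card with hh
  have key : ∀ u ∈ Aᶜ, (N ∩ insert u A).card = if u ∈ N then h + 1 else h := by
    intro u hu
    have huA : u ∉ A := Finset.mem_compl.1 hu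
    by_cases huN : u ∈ N
    · simp only [huN, if_true]
      rw [Finset.inter_comm, Finset.insert_inter_of_mem huN, Finset.card_insert_of_notMem
        (by simp [huA]), Finset.inter_comm]
    · simp only [huN, if_false]
      rw [Finset.inter_comm, Finset.insert_inter_of_notMem huN, Finset.inter_comm]
  have hsplit := Finset.sum_inter_add_sum_sdiff Aᶜ N
      (fun u => (2:ℝ) ^ (-(((N ∩ insert u A).card : ℕ) : ℝ)))
  have e1 : ∑ u ∈ Aᶜ ∩ N, (2:ℝ) ^ (-(((N ∩ insert u A).card : ℕ) : ℝ))
      = ((Aᶜ ∩ N).card : ℝ) * (2:ℝ) ^ (-((h:ℝ) + 1)) := by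
    rw [Finset.sum_congr rfl (fun u hu => ?_), Finset.sum_const, nsmul_eq_mul]
    have hu' := Finset.mem_inter.1 hu
    rw [key u hu'.1]
    simp [hu'.2]
  have e2 : ∑ u ∈ Aᶜ \ N, (2:ℝ) ^ (-(((N ∩ insert u A).card : ℕ) : ℝ))
      = ((Aᶜ \ N).card : ℝ) * (2:ℝ) ^ (-(h:ℝ)) := by
    rw [Finset.sum_congr rfl (fun u hu => ?_), Finset.sum_const, nsmul_eq_mul]
    have hu' := Finset.mem_sdiff.1 hu
    rw [key u hu'.1]
    simp [hu'.2]
  have hcard1 : (Aᶜ ∩ N) = N \ A := by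
    ext x; simp [Finset.mem_sdiff, and_comm]
  have hcard2 : ((Aᶜ \ N).card : ℝ) = (Aᶜ.card : ℝ) - ((N \ A).card : ℝ) := by
    have := Finset.card_inter_add_card_sdiff Aᶜ N
    rw [hcard1] at this
    have : ((N \ A).card + (Aᶜ \ N).card : ℕ) = Aᶜ.card := this
    push_cast [← this]
    ring
  have hpow : (2:ℝ) ^ (-((h:ℝ) + 1)) = (2:ℝ) ^ (-(h:ℝ)) / 2 := by
    rw [show -((h:ℝ) + 1) = -(h:ℝ) - 1 by ring, Real.rpow_sub (by norm_num), Real.rpow_one]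
  rw [← hsplit, e1, e2, hcard1, hpow, hcard2]
  ring

private lemma sdc_inner_le (A : Finset V) (v : V)
    (hn2 : 2 ≤ Fintype.card V)
    (hd : 10 * Real.log (Fintype.card V) ≤ (G.minDegree : ℝ))
    (hL : (33:ℝ)/10 ≤ Real.log (Fintype.card V)) :
    ∑ u ∈ Aᶜ, (2:ℝ) ^ (-(((G.neighborFinset v ∩ insert u A).card : ℕ) : ℝ))
      ≤ (Aᶜ.card : ℝ) *
        ((1 - 11 * (G.minDegree : ℝ) / (40 * (Fintype.card V : ℝ)))
            * (2:ℝ) ^ (-(((G.neighborFinset v ∩ A).card : ℕ) : ℝ))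
          + 11 * (G.minDegree : ℝ) / (40 * (Fintype.card V : ℝ))
            * (2:ℝ) ^ (-(9 * (G.minDegree : ℝ) / 20))) := by
  rw [sdc_inner]
  set n : ℝ := (Fintype.card V : ℝ) with hn
  set d : ℝ := (G.minDegree : ℝ) with hdd
  set s : ℝ := (Aᶜ.card : ℝ) with hs
  set m : ℝ := ((G.neighborFinset v \ A).card : ℝ) with hm
  set h : ℝ := (((G.neighborFinset v ∩ A).card : ℕ) : ℝ) with hh
  set P : ℝ := (2:ℝ) ^ (-h) with hP
  set b : ℝ := (2:ℝ) ^ (-(9 * d / 20)) with hb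
  have hd0 : (0:ℝ) < d := by rw [hdd]; linarith
  have hn0 : (0:ℝ) < n := by
    rw [hn]; exact_mod_cast Nat.lt_of_lt_of_le Nat.zero_lt_two hn2
  have hsn : s ≤ n := by
    rw [hs, hn]; exact_mod_cast Finset.card_le_univ Aᶜ
  have hs0 : (0:ℝ) ≤ s := by rw [hs]; positivity
  have hm0 : (0:ℝ) ≤ m := by rw [hm]; positivity
  have hdeg : d ≤ h + m := by
    have h1 : (G.neighborFinset v ∩ A).card + (G.neighborFinset v \ A).card
        = (G.neighborFinset v).card := Finset.card_inter_add_card_sdiff _ _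
    have h2 : G.minDegree ≤ (G.neighborFinset v).card := G.minDegree_le_degree v
    rw [hdd, hh, hm]
    exact_mod_cast h1 ▸ h2
  have hP0 : (0:ℝ) < P := by rw [hP]; positivity
  have hb0 : (0:ℝ) < b := by rw [hb]; positivity
  have he0 : (0:ℝ) ≤ 11 * d / (40 * n) := by positivity
  have he1 : 11 * d / (40 * n) * n = 11 * d / 40 := by field_simp
  by_cases hc : 11 * d / 20 ≤ m
  · have key : s * (11 * d / (40 * n)) ≤ m / 2 := by
      have := mul_le_mul_of_nonneg_left hsn he0
      rw [mul_comm (11 * d / (40 * n)) n] at this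
      nlinarith
    nlinarith [mul_le_mul_of_nonneg_right key hP0.le,
      mul_nonneg (mul_nonneg hs0 he0) hb0.le]
  · push_neg at hc
    have hPb : P ≤ b := by
      rw [hP, hb]
      exact (Real.rpow_le_rpow_left_iff (by norm_num)).2 (by linarith)
    nlinarith [mul_nonneg hm0 hP0.le,
      mul_le_mul_of_nonneg_left hPb (mul_nonneg hs0 he0)]

private lemma sdc_step (hn2 : 2 ≤ Fintype.card V)
    (hd : 10 * Real.log (Fintype.card V) ≤ (G.minDegree : ℝ))
    (hL : (33:ℝ)/10 ≤ Real.log (Fintype.card V))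
    (A : Finset V) (hA : A ≠ Finset.univ) :
    ∃ u, sdcPsi G (insert u A)
      ≤ (1 - 11 * (G.minDegree : ℝ) / (40 * (Fintype.card V : ℝ))) * sdcPsi G A
        + 11 * (G.minDegree : ℝ) / (40 * (Fintype.card V : ℝ))
          * ((Fintype.card V : ℝ) * (2:ℝ) ^ (-(9 * (G.minDegree : ℝ) / 20))) := by
  have hne : Aᶜ.Nonempty := by
    rw [← Finset.card_pos, Finset.card_compl, tsub_pos_iff_lt]
    exact lt_of_le_of_ne (Finset.card_le_univ A) (fun hc => hA (Finset.eq_univ_of_card A hc))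
  obtain ⟨u0, hu0, hmin⟩ := Finset.exists_min_image Aᶜ (fun u => sdcPsi G (insert u A)) hne
  refine ⟨u0, ?_⟩
  have hcard : (0:ℝ) < (Aᶜ.card : ℝ) := by exact_mod_cast Finset.card_pos.2 hne
  have h1 : (Aᶜ.card : ℝ) * sdcPsi G (insert u0 A) ≤ ∑ u ∈ Aᶜ, sdcPsi G (insert u A) := by
    have := Finset.card_nsmul_le_sum Aᶜ (fun u => sdcPsi G (insert u A))
      (sdcPsi G (insert u0 A)) (fun u hu => hmin u hu)
    rwa [nsmul_eq_mul] at this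
  have h2 : ∑ u ∈ Aᶜ, sdcPsi G (insert u A)
      = ∑ v, ∑ u ∈ Aᶜ, (2:ℝ) ^ (-(((G.neighborFinset v ∩ insert u A).card : ℕ) : ℝ)) := by
    simp only [sdcPsi]; exact Finset.sum_comm
  have h3 : ∑ u ∈ Aᶜ, sdcPsi G (insert u A)
      ≤ (Aᶜ.card : ℝ) *
        ((1 - 11 * (G.minDegree : ℝ) / (40 * (Fintype.card V : ℝ))) * sdcPsi G A
          + 11 * (G.minDegree : ℝ) / (40 * (Fintype.card V : ℝ))
            * ((Fintype.card V : ℝ) * (2:ℝ) ^ (-(9 * (G.minDegree : ℝ) / 20)))) := by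
    rw [h2]
    calc ∑ v, ∑ u ∈ Aᶜ, (2:ℝ) ^ (-(((G.neighborFinset v ∩ insert u A).card : ℕ) : ℝ))
        ≤ ∑ v : V, (Aᶜ.card : ℝ) *
            ((1 - 11 * (G.minDegree : ℝ) / (40 * (Fintype.card V : ℝ)))
                * (2:ℝ) ^ (-(((G.neighborFinset v ∩ A).card : ℕ) : ℝ))
              + 11 * (G.minDegree : ℝ) / (40 * (Fintype.card V : ℝ))
                * (2:ℝ) ^ (-(9 * (G.minDegree : ℝ) / 20))) :=
          Finset.sum_le_sum (fun v _ => sdc_inner_le G A v hn2 hd hL)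
      _ = (Aᶜ.card : ℝ) *
        ((1 - 11 * (G.minDegree : ℝ) / (40 * (Fintype.card V : ℝ))) * sdcPsi G A
          + 11 * (G.minDegree : ℝ) / (40 * (Fintype.card V : ℝ))
            * ((Fintype.card V : ℝ) * (2:ℝ) ^ (-(9 * (G.minDegree : ℝ) / 20)))) := by
          simp only [sdcPsi]
          rw [← Finset.mul_sum, Finset.sum_add_distrib, ← Finset.mul_sum,
            Finset.sum_const, Finset.card_univ, nsmul_eq_mul]
          ring
  exact le_of_mul_le_mul_left (h1.trans h3) hcard

private lemma sdc_iter (hn2 : 2 ≤ Fintype.card V)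
    (hd : 10 * Real.log (Fintype.card V) ≤ (G.minDegree : ℝ))
    (hL : (33:ℝ)/10 ≤ Real.log (Fintype.card V)) (t : ℕ) :
    ∃ A : Finset V, A.card ≤ t ∧
      ((∀ v, 2 * Real.log (Fintype.card V) < ((G.neighborFinset v ∩ A).card : ℝ)) ∨
       sdcPsi G A ≤ (1 - 11 * (G.minDegree : ℝ) / (40 * (Fintype.card V : ℝ))) ^ t
          * (Fintype.card V : ℝ)
          + (Fintype.card V : ℝ) * (2:ℝ) ^ (-(9 * (G.minDegree : ℝ) / 20))) := by
  have hn0 : (0:ℝ) < (Fintype.card V : ℝ) := by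
    exact_mod_cast Nat.lt_of_lt_of_le Nat.zero_lt_two hn2
  have hb0 : (0:ℝ) ≤ (Fintype.card V : ℝ) * (2:ℝ) ^ (-(9 * (G.minDegree : ℝ) / 20)) := by
    positivity
  have hd0 : (0:ℝ) < (G.minDegree : ℝ) := by linarith
  have hV : Nonempty V := Fintype.card_pos_iff.1 (by omega)
  have hdn : (G.minDegree : ℝ) < (Fintype.card V : ℝ) := by
    obtain ⟨v⟩ := hV
    have h1 : G.minDegree ≤ G.degree v := G.minDegree_le_degree v
    have h2 : G.degree v < Fintype.card V := G.degree_lt_card_verts v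
    exact_mod_cast lt_of_le_of_lt h1 h2
  have he0 : (0:ℝ) ≤ 11 * (G.minDegree : ℝ) / (40 * (Fintype.card V : ℝ)) := by positivity
  have he1 : 11 * (G.minDegree : ℝ) / (40 * (Fintype.card V : ℝ)) ≤ 11/40 := by
    rw [div_le_iff₀ (by positivity)]
    nlinarith
  induction t with
  | zero =>
    refine ⟨∅, le_refl _, Or.inr ?_⟩
    have : sdcPsi G ∅ = (Fintype.card V : ℝ) := by
      simp only [sdcPsi]
      simp [Finset.inter_empty, Finset.card_univ]
    rw [this, pow_zero, one_mul]
    linarith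
  | succ t ih =>
    obtain ⟨A, hAc, hor⟩ := ih
    rcases hor with hsucc | hbound
    · exact ⟨A, hAc.trans (Nat.le_succ t), Or.inl hsucc⟩
    by_cases hA : A = Finset.univ
    · refine ⟨A, hAc.trans (Nat.le_succ t), Or.inl (fun v => ?_)⟩
      have h1 : (G.neighborFinset v ∩ A).card = G.degree v := by
        rw [hA, Finset.inter_univ]; rfl
      have h2 : (G.minDegree : ℝ) ≤ ((G.neighborFinset v ∩ A).card : ℝ) := by
        rw [h1]; exact_mod_cast G.minDegree_le_degree v
      have hL0 : (0:ℝ) < Real.log (Fintype.card V) := by linarith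
      linarith
    · obtain ⟨u, hu⟩ := sdc_step G hn2 hd hL A hA
      refine ⟨insert u A, ?_, Or.inr ?_⟩
      · exact le_trans (Finset.card_insert_le u A) (Nat.succ_le_succ hAc)
      · have h1e : (0:ℝ) ≤ 1 - 11 * (G.minDegree : ℝ) / (40 * (Fintype.card V : ℝ)) := by
          linarith
        calc sdcPsi G (insert u A)
            ≤ (1 - 11 * (G.minDegree : ℝ) / (40 * (Fintype.card V : ℝ))) * sdcPsi G A
              + 11 * (G.minDegree : ℝ) / (40 * (Fintype.card V : ℝ))
                * ((Fintype.card V : ℝ) * (2:ℝ) ^ (-(9 * (G.minDegree : ℝ) / 20))) := hu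
          _ ≤ (1 - 11 * (G.minDegree : ℝ) / (40 * (Fintype.card V : ℝ)))
                * ((1 - 11 * (G.minDegree : ℝ) / (40 * (Fintype.card V : ℝ))) ^ t
                    * (Fintype.card V : ℝ)
                  + (Fintype.card V : ℝ) * (2:ℝ) ^ (-(9 * (G.minDegree : ℝ) / 20)))
              + 11 * (G.minDegree : ℝ) / (40 * (Fintype.card V : ℝ))
                * ((Fintype.card V : ℝ) * (2:ℝ) ^ (-(9 * (G.minDegree : ℝ) / 20))) := by
              exact add_le_add_left (mul_le_mul_of_nonneg_left hbound h1e) _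
          _ = (1 - 11 * (G.minDegree : ℝ) / (40 * (Fintype.card V : ℝ))) ^ (t+1)
                * (Fintype.card V : ℝ)
              + (Fintype.card V : ℝ) * (2:ℝ) ^ (-(9 * (G.minDegree : ℝ) / 20)) := by
              ring

end SDCAux

private lemma sdc_exp33 : Real.exp (33/10) ≤ 28 := by
  have h1 : Real.exp 1 < 2.7182818286 := Real.exp_one_lt_d9
  have h2 : Real.exp (33/10) ^ (10:ℕ) = Real.exp 1 ^ (33:ℕ) := by
    rw [← Real.exp_nat_mul, ← Real.exp_nat_mul]; norm_num
  have h3 : Real.exp 1 ^ (33:ℕ) < 2.7182818286 ^ (33:ℕ) :=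
    pow_lt_pow_left₀ h1 (Real.exp_pos 1).le (by norm_num)
  have h4 : (2.7182818286:ℝ) ^ (33:ℕ) ≤ 28 ^ (10:ℕ) := by norm_num
  have h5 : Real.exp (33/10) ^ (10:ℕ) ≤ (28:ℝ) ^ (10:ℕ) := by
    rw [h2]; exact le_trans h3.le h4
  exact le_of_pow_le_pow_left₀ (by norm_num) (by norm_num) h5

private lemma sdc_log_lb (x : ℝ) (h1 : Real.log 2 ≤ x) (h2 : 10 * x + 1 ≤ Real.exp x) :
    33/10 ≤ x := by
  by_contra hc
  push_neg at hc
  have hl2 : (0.6931471803:ℝ) < Real.log 2 := Real.log_two_gt_d9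
  have he : Real.exp x * Real.exp (33/10 - x) = Real.exp (33/10) := by
    rw [← Real.exp_add]; ring_nf
  have hf : 33/10 - x + 1 ≤ Real.exp (33/10 - x) := Real.add_one_le_exp _
  have hx0 : (0:ℝ) < 10 * x + 1 := by linarith
  have hy0 : (0:ℝ) < 33/10 - x + 1 := by linarith
  have key : (10 * x + 1) * (33/10 - x + 1) ≤ 28 := by
    calc (10 * x + 1) * (33/10 - x + 1) ≤ Real.exp x * Real.exp (33/10 - x) := by
          exact mul_le_mul h2 hf hy0.le (Real.exp_pos x).le
      _ = Real.exp (33/10) := he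
      _ ≤ 28 := sdc_exp33
  nlinarith [key, hl2, hc, h1]

set_option maxHeartbeats 1000000 in
/-- For a finite graph `G` on `n ≥ 2` vertices with minimum
degree `δ ≥ 10·ln n`, there is a set `A` of vertices with
`|A| ≤ 10·n·ln(n)/δ` and `|N(v) ∩ A| > 2·ln n` for every vertex `v`. -/
theorem exists_small_dominating_core (V : Type*) [Fintype V] [DecidableEq V]
    (G : SimpleGraph V) [DecidableRel G.Adj]
    (hn : 2 ≤ Fintype.card V)
    (hδ : 10 * Real.log (Fintype.card V) ≤ (G.minDegree : ℝ)) :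
    ∃ A : Finset V,
      (A.card : ℝ) ≤ 10 * (Fintype.card V : ℝ) * Real.log (Fintype.card V)
          / (G.minDegree : ℝ) ∧
      ∀ v : V, 2 * Real.log (Fintype.card V)
          < ((G.neighborFinset v ∩ A).card : ℝ) := by
  classical
  have hn0 : (0:ℝ) < (Fintype.card V : ℝ) := by
    exact_mod_cast Nat.lt_of_lt_of_le Nat.zero_lt_two hn
  have hV : Nonempty V := Fintype.card_pos_iff.1 (by omega)
  have hLlog2 : Real.log 2 ≤ Real.log (Fintype.card V) :=
    Real.log_le_log (by norm_num) (by exact_mod_cast hn)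
  have hexpL : Real.exp (Real.log (Fintype.card V)) = (Fintype.card V : ℝ) :=
    Real.exp_log hn0
  have hdn : (G.minDegree : ℝ) + 1 ≤ (Fintype.card V : ℝ) := by
    obtain ⟨v⟩ := hV
    have h1 : G.minDegree < Fintype.card V :=
      lt_of_le_of_lt (G.minDegree_le_degree v) (G.degree_lt_card_verts v)
    exact_mod_cast h1
  have h10 : 10 * Real.log (Fintype.card V) + 1 ≤ Real.exp (Real.log (Fintype.card V)) := by
    rw [hexpL]; linarith
  have hL : (33:ℝ)/10 ≤ Real.log (Fintype.card V) := sdc_log_lb _ hLlog2 h10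
  -- abbreviations
  set n : ℝ := (Fintype.card V : ℝ) with hnn
  set L : ℝ := Real.log (Fintype.card V) with hLL
  set d : ℝ := (G.minDegree : ℝ) with hdd
  have hL0 : (0:ℝ) < L := by linarith
  have hd0 : (0:ℝ) < d := by linarith
  set T : ℕ := Nat.floor (10 * n * L / d) with hTT
  obtain ⟨A, hAc, hor⟩ := sdc_iter G hn hδ hL T
  rw [← hnn, ← hLL, ← hdd] at hor
  refine ⟨A, ?_, ?_⟩
  · calc (A.card : ℝ) ≤ (T:ℝ) := by exact_mod_cast hAc
      _ ≤ 10 * n * L / d := Nat.floor_le (by positivity)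
  rcases hor with hsucc | hbound
  · exact hsucc
  -- numeric estimates
  have hl2g : (0.6931471803:ℝ) < Real.log 2 := Real.log_two_gt_d9
  have hl2u : Real.log 2 < 0.6931471808 := Real.log_two_lt_d9
  have he0 : (0:ℝ) ≤ 11 * d / (40 * n) := by positivity
  have he1 : 11 * d / (40 * n) ≤ 11/40 := by
    rw [div_le_iff₀ (by positivity)]
    nlinarith
  have hfloor : 10 * n * L / d - 1 < (T:ℝ) := Nat.sub_one_lt_floor _
  have heT : 11*L/4 - 11/40 ≤ 11 * d / (40 * n) * T := by
    have h1 : 11 * d / (40 * n) * (10 * n * L / d - 1) ≤ 11 * d / (40 * n) * T :=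
      mul_le_mul_of_nonneg_left hfloor.le he0
    have h2 : 11 * d / (40 * n) * (10 * n * L / d) = 11 * L / 4 := by
      field_simp; ring
    rw [mul_sub, h2, mul_one] at h1
    linarith
  have hc1a : (1 - 11 * d / (40 * n)) ^ T ≤ Real.exp (-(11 * d / (40 * n) * T)) := by
    calc (1 - 11 * d / (40 * n)) ^ T ≤ Real.exp (-(11 * d / (40 * n))) ^ T := by
          apply pow_le_pow_left₀ (by linarith)
          linarith [Real.add_one_le_exp (-(11 * d / (40 * n)))]
      _ = Real.exp ((T:ℕ) * -(11 * d / (40 * n))) := (Real.exp_nat_mul _ T).symm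
      _ = Real.exp (-(11 * d / (40 * n) * T)) := by ring_nf
  have hXdef : (2:ℝ) ^ (-(2*L)) = Real.exp (Real.log 2 * (-(2*L))) :=
    Real.rpow_def_of_pos (by norm_num) _
  have hbdef : (2:ℝ) ^ (-(9 * d / 20)) = Real.exp (Real.log 2 * (-(9 * d / 20))) :=
    Real.rpow_def_of_pos (by norm_num) _
  have hhalf : (2:ℝ)⁻¹ = Real.exp (-(Real.log 2)) := by
    rw [Real.exp_neg, Real.exp_log (by norm_num : (0:ℝ) < 2)]
  have c1 : (1 - 11 * d / (40 * n)) ^ T * n ≤ (2:ℝ) ^ (-(2*L)) / 2 := by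
    have step1 : (1 - 11 * d / (40 * n)) ^ T * n
        ≤ Real.exp (-(11 * d / (40 * n) * T)) * Real.exp L := by
      rw [hexpL]
      exact mul_le_mul_of_nonneg_right hc1a hn0.le
    have step2 : Real.exp (-(11 * d / (40 * n) * T)) * Real.exp L
        = Real.exp (L - 11 * d / (40 * n) * T) := by
      rw [← Real.exp_add]; ring_nf
    have step3 : Real.exp (L - 11 * d / (40 * n) * T)
        ≤ Real.exp (Real.log 2 * (-(2*L)) - Real.log 2) := by
      apply Real.exp_le_exp.2
      have hb1 : (2*L + 1) * Real.log 2 ≤ (2*L + 1) * 0.6931471808 :=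
        mul_le_mul_of_nonneg_left hl2u.le (by linarith)
      nlinarith [hb1, heT, hL]
    have step4 : Real.exp (Real.log 2 * (-(2*L)) - Real.log 2) = (2:ℝ) ^ (-(2*L)) / 2 := by
      rw [Real.exp_sub, hXdef, Real.exp_log (by norm_num : (0:ℝ) < 2)]
    calc (1 - 11 * d / (40 * n)) ^ T * n
        ≤ Real.exp (-(11 * d / (40 * n) * T)) * Real.exp L := step1
      _ = Real.exp (L - 11 * d / (40 * n) * T) := step2
      _ ≤ Real.exp (Real.log 2 * (-(2*L)) - Real.log 2) := step3
      _ = (2:ℝ) ^ (-(2*L)) / 2 := step4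
  have c2 : n * (2:ℝ) ^ (-(9 * d / 20)) < (2:ℝ) ^ (-(2*L)) / 2 := by
    have step1 : n * (2:ℝ) ^ (-(9 * d / 20))
        = Real.exp (L + Real.log 2 * (-(9 * d / 20))) := by
      rw [Real.exp_add, hexpL, hbdef]
    have step2 : Real.exp (L + Real.log 2 * (-(9 * d / 20)))
        < Real.exp (Real.log 2 * (-(2*L)) - Real.log 2) := by
      apply Real.exp_lt_exp.2
      have hb1 : 0.6931471803 * L ≤ Real.log 2 * L :=
        mul_le_mul_of_nonneg_right hl2g.le hL0.le
      have hb2 : Real.log 2 * (10 * L) ≤ Real.log 2 * d :=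
        mul_le_mul_of_nonneg_left (by rw [hLL, hdd]; exact hδ) (by linarith)
      nlinarith [hb1, hb2, hl2u, hL]
    have step4 : Real.exp (Real.log 2 * (-(2*L)) - Real.log 2) = (2:ℝ) ^ (-(2*L)) / 2 := by
      rw [Real.exp_sub, hXdef, Real.exp_log (by norm_num : (0:ℝ) < 2)]
    rw [step1, ← step4]
    exact step2
  have hPsi : sdcPsi G A < (2:ℝ) ^ (-(2*L)) := by
    calc sdcPsi G A ≤ (1 - 11 * d / (40 * n)) ^ T * n + n * (2:ℝ) ^ (-(9 * d / 20)) := hbound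
      _ < (2:ℝ) ^ (-(2*L)) / 2 + (2:ℝ) ^ (-(2*L)) / 2 := by
          exact add_lt_add_of_le_of_lt c1 c2
      _ = (2:ℝ) ^ (-(2*L)) := by ring
  intro v
  by_contra hv
  push_neg at hv
  have h1 : (2:ℝ) ^ (-(2*L)) ≤ (2:ℝ) ^ (-(((G.neighborFinset v ∩ A).card : ℕ) : ℝ)) := by
    apply (Real.rpow_le_rpow_left_iff (by norm_num : (1:ℝ) < 2)).2
    linarith
  have h2 : (2:ℝ) ^ (-(((G.neighborFinset v ∩ A).card : ℕ) : ℝ)) ≤ sdcPsi G A := by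
    simp only [sdcPsi]
    exact Finset.single_le_sum
      (f := fun w => (2:ℝ) ^ (-(((G.neighborFinset w ∩ A).card : ℕ) : ℝ)))
      (fun i _ => by positivity) (Finset.mem_univ v)
  linarith
end

section
/- (Beck's criterion, Breaker version.) Let q be a positive integer and let (X, F) be a finite hypergraph. In the (1 : q) Maker–Breaker game on (X, F) in which Breaker moves first (Maker claims 1 element per round, Breaker claims up to q elements per round, all from the previously unclaimed elements of X), Breaker has a strategy ensuring that the number of sets F ∈ F fully claimed by Maker at the end of the game is at most ∑_{F ∈ F} (1+q)^(−|F|). -/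
/-- A position in the biased `(1 : q)` Maker–Breaker game on a finite
hypergraph `𝓕` over `X`, with Breaker to move. `BreakerEnsures q 𝓕 s free maker`
means: with `free` the set of unclaimed elements and `maker` the set of
elements claimed by Maker so far, Breaker (moving now, claiming up to `q` free
elements per round, after which Maker claims one free element) has a strategy
guaranteeing that at the end of the game (when all elements are claimed) the
number of winning sets `F ∈ 𝓕` fully claimed by Maker is at most `s`. -/
inductive BreakerEnsures {X : Type*} [DecidableEq X] (q : ℕ)
    (𝓕 : Finset (Finset X)) (s : ℝ) : Finset X → Finset X → Prop
  | endgame (free maker B : Finset X) :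
      B ⊆ free → B.card ≤ q → free \ B = ∅ →
      (((𝓕.filter (fun F => F ⊆ maker)).card : ℝ) ≤ s) →
      BreakerEnsures q 𝓕 s free maker
  | step (free maker B : Finset X) :
      B ⊆ free → B.card ≤ q → (free \ B).Nonempty →
      (∀ x ∈ free \ B,
        BreakerEnsures q 𝓕 s ((free \ B).erase x) (insert x maker)) →
      BreakerEnsures q 𝓕 s free maker

namespace BeckAux

variable {X : Type*} [DecidableEq X] (q : ℕ) (𝓕 : Finset (Finset X))

/-- The potential of a position. -/
noncomputable def Φ (free maker : Finset X) : ℝ :=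
  ∑ F ∈ 𝓕.filter (fun F => F ⊆ maker ∪ free), ((1 + q : ℝ) ^ (F \ maker).card)⁻¹

/-- The weight of an element. -/
noncomputable def w (free maker : Finset X) (x : X) : ℝ :=
  ∑ F ∈ 𝓕.filter (fun F => F ⊆ maker ∪ free ∧ x ∈ F),
    ((1 + q : ℝ) ^ (F \ maker).card)⁻¹

lemma term_nonneg (F maker : Finset X) : (0 : ℝ) ≤ ((1 + q : ℝ) ^ (F \ maker).card)⁻¹ := by
  positivity

lemma w_nonneg (free maker : Finset X) (x : X) : 0 ≤ w q 𝓕 free maker x :=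
  Finset.sum_nonneg fun F _ => term_nonneg q F maker

lemma Φ_nonneg (free maker : Finset X) : 0 ≤ Φ q 𝓕 free maker :=
  Finset.sum_nonneg fun F _ => term_nonneg q F maker

lemma w_mono {free' free : Finset X} (h : free' ⊆ free) (maker : Finset X) (x : X) :
    w q 𝓕 free' maker x ≤ w q 𝓕 free maker x := by
  apply Finset.sum_le_sum_of_subset_of_nonneg
  · intro F hF
    rw [Finset.mem_filter] at hF ⊢
    exact ⟨hF.1, hF.2.1.trans (Finset.union_subset_union_right h), hF.2.2⟩
  · intro F _ _; exact term_nonneg q F maker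

/-- Effect of Breaker claiming `y`. -/
lemma Φ_breaker {free maker : Finset X} {y : X} (hy : y ∈ free) (hym : y ∉ maker) :
    Φ q 𝓕 (free.erase y) maker = Φ q 𝓕 free maker - w q 𝓕 free maker y := by
  have hsplit := Finset.sum_filter_add_sum_filter_not
    (𝓕.filter (fun F => F ⊆ maker ∪ free)) (fun F => y ∈ F)
    (fun F => ((1 + q : ℝ) ^ (F \ maker).card)⁻¹)
  rw [Finset.filter_filter, Finset.filter_filter] at hsplit
  have h1 : 𝓕.filter (fun F => F ⊆ maker ∪ free ∧ y ∈ F)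
      = 𝓕.filter (fun F => y ∈ F ∧ F ⊆ maker ∪ free) := by
    apply Finset.filter_congr; intro F _; exact and_comm
  have h2 : 𝓕.filter (fun F => F ⊆ maker ∪ free.erase y)
      = 𝓕.filter (fun F => (F ⊆ maker ∪ free) ∧ ¬ y ∈ F) := by
    apply Finset.filter_congr; intro F _
    constructor
    · intro h
      constructor
      · exact h.trans (Finset.union_subset_union_right (Finset.erase_subset y free))
      · intro hyF
        rcases Finset.mem_union.mp (h hyF) with h' | h'
        · exact hym h'
        · exact (Finset.notMem_erase y free) h'
    · rintro ⟨hsub, hyF⟩ a haF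
      rcases Finset.mem_union.mp (hsub haF) with h' | h'
      · exact Finset.mem_union_left _ h'
      · refine Finset.mem_union_right _ (Finset.mem_erase.mpr ⟨?_, h'⟩)
        rintro rfl; exact hyF haF
  unfold Φ w
  rw [h2, ← hsplit, h1]
  ring

/-- Effect of Maker claiming `x`. -/
lemma Φ_maker {free maker : Finset X} {x : X} (hx : x ∈ free) (hxm : x ∉ maker) :
    Φ q 𝓕 (free.erase x) (insert x maker)
      = Φ q 𝓕 free maker + q * w q 𝓕 free maker x := by
  have hset : insert x maker ∪ free.erase x = maker ∪ free := by
    ext a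
    by_cases hax : a = x
    · subst hax; simp [hx]
    · simp only [Finset.mem_union, Finset.mem_insert, Finset.mem_erase, hax,
        false_or, and_true]
      tauto
  have hr : (0 : ℝ) < 1 + q := by positivity
  unfold Φ w
  rw [hset]
  have hsplit := Finset.sum_filter_add_sum_filter_not
    (𝓕.filter (fun F => F ⊆ maker ∪ free)) (fun F => x ∈ F)
    (fun F => ((1 + q : ℝ) ^ (F \ insert x maker).card)⁻¹)
  have hsplit' := Finset.sum_filter_add_sum_filter_not
    (𝓕.filter (fun F => F ⊆ maker ∪ free)) (fun F => x ∈ F)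
    (fun F => ((1 + q : ℝ) ^ (F \ maker).card)⁻¹)
  rw [← hsplit, ← hsplit']
  have h1 : 𝓕.filter (fun F => F ⊆ maker ∪ free ∧ x ∈ F)
      = (𝓕.filter (fun F => F ⊆ maker ∪ free)).filter (fun F => x ∈ F) := by
    rw [Finset.filter_filter]
  rw [h1]
  have heq2 : ∀ F ∈ (𝓕.filter (fun F => F ⊆ maker ∪ free)).filter (fun F => ¬ x ∈ F),
      ((1 + q : ℝ) ^ (F \ insert x maker).card)⁻¹
        = ((1 + q : ℝ) ^ (F \ maker).card)⁻¹ := by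
    intro F hF
    have hxF : x ∉ F := (Finset.mem_filter.mp hF).2
    congr 2
    congr 1
    ext a
    simp only [Finset.mem_sdiff, Finset.mem_insert]
    constructor
    · rintro ⟨ha, h2⟩; exact ⟨ha, fun h => h2 (Or.inr h)⟩
    · rintro ⟨ha, h2⟩
      refine ⟨ha, ?_⟩
      rintro (rfl | h)
      · exact hxF ha
      · exact h2 h
  rw [Finset.sum_congr rfl heq2]
  have heq1 : ∀ F ∈ (𝓕.filter (fun F => F ⊆ maker ∪ free)).filter (fun F => x ∈ F),
      ((1 + q : ℝ) ^ (F \ insert x maker).card)⁻¹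
        = ((1 + q : ℝ) ^ (F \ maker).card)⁻¹
          + q * ((1 + q : ℝ) ^ (F \ maker).card)⁻¹ := by
    intro F hF
    have hxF : x ∈ F := (Finset.mem_filter.mp hF).2
    have hxFm : x ∈ F \ maker := Finset.mem_sdiff.mpr ⟨hxF, hxm⟩
    have hins : F \ insert x maker = (F \ maker).erase x := by
      ext a
      simp only [Finset.mem_sdiff, Finset.mem_insert, Finset.mem_erase]
      tauto
    have hcard : (F \ maker).card = (F \ insert x maker).card + 1 := by
      rw [hins, Finset.card_erase_of_mem hxFm]
      exact (Nat.succ_pred_eq_of_pos (Finset.card_pos.mpr ⟨x, hxFm⟩)).symm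
    have hr' : ((1 + q : ℝ) ^ (F \ insert x maker).card)⁻¹
        = (1 + q : ℝ) * ((1 + q : ℝ) ^ (F \ maker).card)⁻¹ := by
      rw [hcard, pow_succ]
      have h0 : ((1 + q : ℝ) ^ (F \ insert x maker).card) ≠ 0 := by positivity
      field_simp
    rw [hr']
    ring
  rw [Finset.sum_congr rfl heq1, Finset.sum_add_distrib, ← Finset.mul_sum]
  ring

lemma count_le_Φ (free maker : Finset X) :
    ((𝓕.filter (fun F => F ⊆ maker)).card : ℝ) ≤ Φ q 𝓕 free maker := by
  have h : ((𝓕.filter (fun F => F ⊆ maker)).card : ℝ)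
      = ∑ F ∈ 𝓕.filter (fun F => F ⊆ maker), ((1 + q : ℝ) ^ (F \ maker).card)⁻¹ := by
    rw [Finset.card_eq_sum_ones]
    push_cast
    refine Finset.sum_congr rfl fun F hF => ?_
    have : F \ maker = ∅ :=
      Finset.sdiff_eq_empty_iff_subset.mpr (Finset.mem_filter.mp hF).2
    rw [this]
    simp
  rw [h]
  apply Finset.sum_le_sum_of_subset_of_nonneg
  · intro F hF
    rw [Finset.mem_filter] at hF ⊢
    exact ⟨hF.1, hF.2.trans Finset.subset_union_left⟩
  · intro F _ _; exact term_nonneg q F maker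

/-- The greedy choice of Breaker's `n` elements. -/
lemma greedy : ∀ (n : ℕ) (free maker : Finset X), n ≤ free.card →
    Disjoint free maker →
    ∃ B, B ⊆ free ∧ B.card = n ∧
      ∀ x ∈ free \ B,
        Φ q 𝓕 (free \ B) maker + n * w q 𝓕 (free \ B) maker x
          ≤ Φ q 𝓕 free maker := by
  intro n
  induction n with
  | zero =>
    intro free maker _ _
    refine ⟨∅, Finset.empty_subset _, Finset.card_empty, ?_⟩
    intro x _
    rw [Finset.sdiff_empty]
    simp
  | succ n IH =>
    intro free maker hn hdisj
    have hne : free.Nonempty := Finset.card_pos.mp (by omega)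
    obtain ⟨y, hy, hmax⟩ := Finset.exists_max_image free (w q 𝓕 free maker) hne
    have hym : y ∉ maker := Finset.disjoint_left.mp hdisj hy
    have hcard' : n ≤ (free.erase y).card := by
      rw [Finset.card_erase_of_mem hy]; omega
    have hdisj' : Disjoint (free.erase y) maker :=
      Finset.disjoint_of_subset_left (Finset.erase_subset y free) hdisj
    obtain ⟨B', hB'sub, hB'card, hB'good⟩ := IH (free.erase y) maker hcard' hdisj'
    have hyB' : y ∉ B' := fun h => Finset.notMem_erase y free (hB'sub h)
    refine ⟨insert y B', ?_, ?_, ?_⟩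
    · intro a ha
      rcases Finset.mem_insert.mp ha with rfl | h
      · exact hy
      · exact (Finset.erase_subset y free) (hB'sub h)
    · rw [Finset.card_insert_of_notMem hyB', hB'card]
    · have hsd : free \ insert y B' = (free.erase y) \ B' := by
        ext a
        simp only [Finset.mem_sdiff, Finset.mem_insert, Finset.mem_erase]
        tauto
      intro x hx
      rw [hsd] at hx ⊢
      have hIH := hB'good x hx
      have hbr := Φ_breaker q 𝓕 hy hym
      have hxfree : x ∈ free := by
        have := (Finset.mem_sdiff.mp hx).1
        exact (Finset.erase_subset y free) this
      have hw1 : w q 𝓕 ((free.erase y) \ B') maker x ≤ w q 𝓕 free maker x :=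
        w_mono q 𝓕 ((Finset.sdiff_subset).trans (Finset.erase_subset y free)) maker x
      have hw2 : w q 𝓕 free maker x ≤ w q 𝓕 free maker y := hmax x hxfree
      push_cast
      linarith
lemma main : ∀ (n : ℕ) (free maker : Finset X), free.card = n →
    Disjoint free maker → ∀ s : ℝ, Φ q 𝓕 free maker ≤ s →
    BreakerEnsures q 𝓕 s free maker := by
  intro n
  induction n using Nat.strong_induction_on with
  | _ n IH =>
    intro free maker hcard hdisj s hs
    by_cases hle : free.card ≤ q
    · exact .endgame free maker free (subset_refl _) hle (Finset.sdiff_self free)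
        ((count_le_Φ q 𝓕 free maker).trans hs)
    · push_neg at hle
      obtain ⟨B, hBsub, hBcard, hgood⟩ :=
        greedy q 𝓕 q free maker (le_of_lt hle) hdisj
      have hsd : (free \ B).card = free.card - q := by
        rw [Finset.card_sdiff_of_subset hBsub, hBcard]
      refine .step free maker B hBsub (le_of_eq hBcard) ?_ ?_
      · apply Finset.card_pos.mp
        omega
      · intro x hx
        have hxfree : x ∈ free := (Finset.mem_sdiff.mp hx).1
        have hxm : x ∉ maker := Finset.disjoint_left.mp hdisj hxfree
        have hΦ := Φ_maker q 𝓕 hx hxm (maker := maker) (free := free \ B)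
        have hdisj2 : Disjoint ((free \ B).erase x) (insert x maker) := by
          rw [Finset.disjoint_left]
          intro a ha
          have hax : a ≠ x := (Finset.mem_erase.mp ha).1
          have hafree : a ∈ free :=
            (Finset.mem_sdiff.mp ((Finset.mem_erase.mp ha).2)).1
          rw [Finset.mem_insert]
          rintro (rfl | h)
          · exact hax rfl
          · exact Finset.disjoint_left.mp hdisj hafree h
        have hcard2 : ((free \ B).erase x).card < n := by
          rw [Finset.card_erase_of_mem hx]
          omega
        apply IH _ hcard2 _ _ rfl hdisj2
        rw [hΦ]
        calc Φ q 𝓕 (free \ B) maker + q * w q 𝓕 (free \ B) maker x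
            ≤ Φ q 𝓕 free maker := hgood x hx
          _ ≤ s := hs

end BeckAux

/-- Beck's criterion, Breaker version: in the `(1 : q)`
Maker–Breaker game on a finite hypergraph `(X, 𝓕)` with Breaker moving first,
Breaker can ensure that Maker fully claims at most
`∑_{F ∈ 𝓕} (1+q)^{−|F|}` winning sets. -/
theorem beck_criterion {X : Type*} [DecidableEq X] [Fintype X]
    (q : ℕ) (hq : 1 ≤ q) (𝓕 : Finset (Finset X)) :
    BreakerEnsures q 𝓕 (∑ F ∈ 𝓕, ((1 + q : ℝ) ^ F.card)⁻¹)
      Finset.univ ∅ := by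
  apply BeckAux.main q 𝓕 (Finset.univ.card) Finset.univ ∅ rfl
    (Finset.disjoint_empty_right _)
  apply le_of_eq
  unfold BeckAux.Φ
  rw [Finset.filter_true_of_mem (fun F _ => by simp)]
  exact Finset.sum_congr rfl fun F _ => by rw [Finset.sdiff_empty]
end

section
/- Let b be a positive integer and let T be a perfect (b+1)-ary rooted tree (every internal vertex has exactly b+1 children and all leaves are at the same depth). Consider the Maker–Breaker game on the vertex set of T whose winning sets are the vertex sets of root-to-leaf paths, played with bias (1 : b): Maker claims 1 unclaimed vertex per round and Breaker claims up to b unclaimed vertices per round, with Maker moving first. Then Maker has a strategy to claim all vertices of some root-to-leaf path. -/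
/-- The vertices of a perfect `(b+1)`-ary rooted tree of depth `k`: a vertex at
depth `i ≤ k` is a sequence of `i` child-choices from `Fin (b+1)`. -/
abbrev PerfectTreeVertex (b k : ℕ) := Σ i : Fin (k + 1), Fin (i : ℕ) → Fin (b + 1)

/-- The winning sets: for each leaf (given by `f : Fin k → Fin (b+1)`), the set
of vertices of the root-to-leaf path towards it, i.e. all its prefixes. -/
def rootLeafPaths (b k : ℕ) : Finset (Finset (PerfectTreeVertex b k)) :=
  Finset.image
    (fun f : Fin k → Fin (b + 1) =>
      Finset.image
        (fun i : Fin (k + 1) =>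
          (⟨i, fun j => f (Fin.castLE (Nat.lt_succ_iff.mp i.isLt) j)⟩ :
            PerfectTreeVertex b k))
        Finset.univ)
    Finset.univ

/-- `MakerWins b 𝓕 free maker` : in the `(1 : b)` Maker–Breaker game on the
winning sets `𝓕`, with `free` the unclaimed elements and `maker` Maker's
elements, Maker (to move, claiming one free element per round, after which
Breaker claims up to `b` free elements) has a strategy to eventually claim all
elements of some winning set. -/
inductive MakerWins {X : Type*} [DecidableEq X] (b : ℕ)
    (𝓕 : Finset (Finset X)) : Finset X → Finset X → Prop
  | of_win (free maker : Finset X) :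
      (∃ W ∈ 𝓕, W ⊆ maker) → MakerWins b 𝓕 free maker
  | step (free maker : Finset X) (x : X) :
      x ∈ free →
      (∀ B ⊆ free.erase x, B.card ≤ b →
        MakerWins b 𝓕 ((free.erase x) \ B) (insert x maker)) →
      MakerWins b 𝓕 free maker

def Pfx {b k : ℕ} (f : Fin k → Fin (b+1)) (j : Fin (k+1)) : PerfectTreeVertex b k :=
  ⟨j, fun t => f (Fin.castLE (Nat.lt_succ_iff.mp j.isLt) t)⟩

lemma key {b k : ℕ} :
    ∀ n i, i + n = k → ∀ (f : Fin k → Fin (b+1))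
      (free maker B : Finset (PerfectTreeVertex b k)),
    B.card ≤ b →
    (∀ j : Fin (k+1), (j:ℕ) ≤ i → Pfx f j ∈ maker) →
    (∀ v : PerfectTreeVertex b k, i < (v.1:ℕ) →
       (∀ (t : ℕ) (h1 : t < (v.1:ℕ)) (h2 : t < k), t < i → v.2 ⟨t,h1⟩ = f ⟨t,h2⟩) →
       v ∉ B → v ∈ free) →
    MakerWins b (rootLeafPaths b k) free maker := by
  intro n
  induction n with
  | zero =>
    intro i hik f free maker B hB hM hF
    apply MakerWins.of_win
    refine ⟨Finset.image (Pfx f) Finset.univ, ?_, ?_⟩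
    · exact Finset.mem_image.2 ⟨f, Finset.mem_univ f, rfl⟩
    · intro v hv
      obtain ⟨j, -, rfl⟩ := Finset.mem_image.1 hv
      exact hM j (by omega)
  | succ n ih =>
    intro i hik f free maker B hB hM hF
    have hik' : i < k := by omega
    set g : PerfectTreeVertex b k → Fin (b+1) :=
      fun v => if h : i < (v.1:ℕ) then v.2 ⟨i, h⟩ else 0 with hg
    obtain ⟨c, hc⟩ : ∃ c, c ∉ B.image g := by
      by_contra h
      push_neg at h
      have h1 : (Finset.univ : Finset (Fin (b+1))) ⊆ B.image g := fun c _ => h c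
      have h2 := Finset.card_le_card h1
      have h3 := Finset.card_image_le (f := g) (s := B)
      simp only [Finset.card_univ, Fintype.card_fin] at h2
      omega
    set x : PerfectTreeVertex b k :=
      ⟨⟨i+1, by omega⟩, fun t => if ht : (t:ℕ) < i then f ⟨t, by omega⟩ else c⟩ with hx
    have hgx : g x = c := by
      have h1 : i < ((x.1 : ℕ)) := Nat.lt_succ_self i
      have e1 : g x = x.2 ⟨i, h1⟩ := dif_pos h1
      rw [e1]
      exact dif_neg (lt_irrefl i)
    have hxB : x ∉ B := by
      intro hxB
      exact hc (Finset.mem_image.2 ⟨x, hxB, hgx⟩)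
    have hxfree : x ∈ free := by
      apply hF x (by simp [hx]) _ hxB
      intro t h1 h2 ht
      show (if ht' : t < i then _ else c) = f ⟨t, h2⟩
      rw [dif_pos ht]
    apply MakerWins.step free maker x hxfree
    intro B' hB'sub hB'card
    set f' := Function.update f ⟨i, hik'⟩ c with hf'
    apply ih (i+1) (by omega) f' _ _ B' hB'card
    · intro j hj
      by_cases hji : (j:ℕ) ≤ i
      · have hpe : Pfx f' j = Pfx f j := by
          unfold Pfx
          apply congrArg (Sigma.mk j)
          funext t
          rw [hf']
          apply Function.update_of_ne
          intro hteq
          have : (t : ℕ) = i := congrArg Fin.val hteq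
          omega
        rw [hpe]
        exact Finset.mem_insert_of_mem (hM j hji)
      · have hji' : (j:ℕ) = i + 1 := by omega
        have hpe : Pfx f' j = x := by
          unfold Pfx
          rw [hx]
          obtain ⟨jv, hjv⟩ := j
          simp only at hji'
          subst hji'
          apply congrArg (Sigma.mk _)
          funext t
          by_cases ht : (t : ℕ) < i
          · rw [dif_pos ht]
            show f' _ = _
            rw [hf']
            apply Function.update_of_ne
            intro hteq
            have : (t : ℕ) = i := congrArg Fin.val hteq
            omega
          · rw [dif_neg ht]
            show f' _ = c
            have : (t : ℕ) = i := by omega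
            rw [hf']
            have heq : (Fin.castLE (Nat.lt_succ_iff.mp (Fin.isLt ⟨i+1, hjv⟩)) t) = ⟨i, hik'⟩ :=
              Fin.ext this
            rw [heq, Function.update_self]
        rw [hpe]
        exact Finset.mem_insert_self x maker
    · intro v hv hagree hvB'
      have hvB : v ∉ B := by
        intro hvB
        apply hc
        refine Finset.mem_image.2 ⟨v, hvB, ?_⟩
        have h1 : i < (v.1:ℕ) := by omega
        have e1 : g v = v.2 ⟨i, h1⟩ := dif_pos h1
        rw [e1, hagree i h1 hik' (by omega), hf', Function.update_self]
      have hvfree : v ∈ free := by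
        apply hF v (by omega) _ hvB
        intro t h1 h2 ht
        rw [hagree t h1 h2 (by omega), hf']
        apply Function.update_of_ne
        intro hteq
        have : (t : ℕ) = i := congrArg Fin.val hteq
        omega
      refine Finset.mem_sdiff.2 ⟨Finset.mem_erase.2 ⟨?_, hvfree⟩, hvB'⟩
      intro hvx
      rw [hvx] at hv
      simp [hx] at hv


/-- For every positive integer `b`, Maker (moving first, with
bias `(1 : b)`) wins the Maker–Breaker game on the vertex set of a perfect
`(b+1)`-ary rooted tree of any depth `k`, whose winning sets are the vertex
sets of root-to-leaf paths. -/
theorem maker_wins_on_perfect_tree (b k : ℕ) (hb : 1 ≤ b) :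
    MakerWins b (rootLeafPaths b k) Finset.univ ∅ := by
  apply MakerWins.step _ _ (⟨⟨0, Nat.succ_pos k⟩, fun t => t.elim0⟩ : PerfectTreeVertex b k)
    (Finset.mem_univ _)
  intro B hBsub hBcard
  apply key k 0 (by omega) (fun _ => 0) _ _ B hBcard
  · intro j hj
    have hj0 : (j:ℕ) = 0 := Nat.le_zero.1 hj
    have hpe : Pfx (b := b) (fun _ => 0) j =
        (⟨⟨0, Nat.succ_pos k⟩, fun t => t.elim0⟩ : PerfectTreeVertex b k) := by
      unfold Pfx
      obtain ⟨jv, hjv⟩ := j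
      simp only at hj0
      subst hj0
      apply congrArg (Sigma.mk _)
      funext t
      exact t.elim0
    rw [hpe]
    exact Finset.mem_insert_self _ _
  · intro v hv _ hvB
    refine Finset.mem_sdiff.2 ⟨Finset.mem_erase.2 ⟨?_, Finset.mem_univ v⟩, hvB⟩
    intro h
    rw [h] at hv
    simp at hv
end
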